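/- arXiv:1907.05920 — 5 statements merged into one kernel-verified Lean document; each statement's English description precedes it below -/
import Mathlib

section
/- For any language E of guarded strings and sets of atoms B, C ⊆ At, the loop tightening law holds: (E +_C At)^(B) = (C ⋄ E)^(B). -/
/-- A guarded string over actions `S` and atoms `A`: an initial atom followed by a
list of (action, atom) pairs, representing `α₀p₁α₁⋯pₙαₙ`. -/
abbrev GS (S A : Type*) := A × List (S × A)

variable {S A : Type*}

/-- The last atom of a guarded string. -/
def lastAtom (x : GS S A) : A := ((x.2.map Prod.snd).getLast?).getD x.1

/-- Fusion product of languages of guarded strings: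
`(xα) ⋄ (βy) = xαy` when `α = β`, undefined otherwise. -/
def fprod (L K : Set (GS S A)) : Set (GS S A) :=
  {z | ∃ x ∈ L, ∃ y ∈ K, lastAtom x = y.1 ∧ z = (x.1, x.2 ++ y.2)}

/-- A set of atoms viewed as the language of single-atom guarded strings. -/
def atomsL (B : Set A) : Set (GS S A) := {x | x.1 ∈ B ∧ x.2 = []}

/-- Powers of a language with respect to the fusion product: `L⁰ = At`, `L^{n+1} = Lⁿ ⋄ L`. -/
def fpow (L : Set (GS S A)) : ℕ → Set (GS S A)
  | 0 => atomsL Set.univ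
  | n + 1 => fprod (fpow L n) L

/-- Guarded union: `L +_B K = (B ⋄ L) ∪ (B̄ ⋄ K)`. -/
def gunion (L K : Set (GS S A)) (B : Set A) : Set (GS S A) :=
  fprod (atomsL B) L ∪ fprod (atomsL Bᶜ) K

/-- Guarded iteration: `L^(B) = ⋃_{n≥0} (B ⋄ L)ⁿ ⋄ B̄`. -/
def gloop (L : Set (GS S A)) (B : Set A) : Set (GS S A) :=
  ⋃ n : ℕ, fprod (fpow (fprod (atomsL B) L) n) (atomsL Bᶜ)

lemma fprod_atomsL_left (D : Set A) (K : Set (GS S A)) :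
    fprod (atomsL D) K = {x | x ∈ K ∧ x.1 ∈ D} := by
  ext z
  constructor
  · rintro ⟨x, ⟨hx1, hx2⟩, y, hy, hla, rfl⟩
    obtain ⟨a, l⟩ := x
    simp only at hx2; subst hx2
    have : lastAtom ((a, []) : GS S A) = a := rfl
    rw [this] at hla
    obtain ⟨b, m⟩ := y
    simp only at hla; subst hla
    exact ⟨hy, hx1⟩
  · rintro ⟨hz, hz1⟩
    exact ⟨(z.1, []), ⟨hz1, rfl⟩, z, hz, rfl, by simp⟩

lemma fprod_mono {L L' K K' : Set (GS S A)} (hL : L ⊆ L') (hK : K ⊆ K') :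
    fprod L K ⊆ fprod L' K' := by
  rintro z ⟨x, hx, y, hy, hla, rfl⟩
  exact ⟨x, hL hx, y, hK hy, hla, rfl⟩

lemma fpow_mono {L L' : Set (GS S A)} (hL : L ⊆ L') (n : ℕ) :
    fpow L n ⊆ fpow L' n := by
  induction n with
  | zero => exact le_rfl
  | succ n ih => exact fprod_mono ih hL

lemma fpow_union_atoms (N : Set (GS S A)) (D : Set A) (n : ℕ) :
    fpow (N ∪ atomsL D) n ⊆ ⋃ m, fpow N m := by
  induction n with
  | zero => exact Set.subset_iUnion (fun m => fpow N m) 0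
  | succ n ih =>
    rintro z ⟨x, hx, y, hy, hla, rfl⟩
    obtain ⟨m, hm⟩ := Set.mem_iUnion.mp (ih hx)
    rcases hy with hy | ⟨_, hy2⟩
    · exact Set.mem_iUnion.mpr ⟨m + 1, x, hm, y, hy, hla, rfl⟩
    · rw [hy2]
      simpa using Set.mem_iUnion.mpr ⟨m, hm⟩

theorem gloop_tighten [Fintype S] [Fintype A] [Nonempty S] [Nonempty A]
    (E : Set (GS S A)) (B C : Set A) :
    gloop (gunion E (atomsL Set.univ) C) B = gloop (fprod (atomsL C) E) B := by
  set N : Set (GS S A) := fprod (atomsL B) (fprod (atomsL C) E) with hN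
  have hM : fprod (atomsL B) (gunion E (atomsL Set.univ) C)
      = N ∪ atomsL (B ∩ Cᶜ) := by
    rw [hN, gunion, fprod_atomsL_left (Cᶜ), fprod_atomsL_left B, fprod_atomsL_left B]
    ext z
    simp only [Set.mem_setOf_eq, Set.mem_union, atomsL, Set.mem_inter_iff,
      Set.mem_compl_iff, Set.mem_univ, true_and]
    tauto
  unfold gloop
  rw [hM]
  apply Set.Subset.antisymm
  · rintro z hz
    obtain ⟨n, hn⟩ := Set.mem_iUnion.mp hz
    obtain ⟨x, hx, y, hy, hla, rfl⟩ := hn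
    obtain ⟨m, hm⟩ := Set.mem_iUnion.mp (fpow_union_atoms N (B ∩ Cᶜ) n hx)
    exact Set.mem_iUnion.mpr ⟨m, x, hm, y, hy, hla, rfl⟩
  · refine Set.iUnion_mono fun n => fprod_mono ?_ le_rfl
    exact fpow_mono Set.subset_union_left n
end

section
/- If E(e) ≡_BA 0 (the loop body is strictly productive) and ⟦g⟧ = ⟦e⟧ ⋄ ⟦g⟧ +_{⟦b⟧} ⟦f⟧, then ⟦g⟧ = ⟦e^(b)⟧ ⋄ ⟦f⟧; i.e., the fixpoint rule is sound in the language model. -/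
variable {S A : Type*}

/-- Boolean expressions over primitive tests `T`. -/
inductive BExp (T : Type*) where
  | zero : BExp T
  | one : BExp T
  | tst (t : T) : BExp T
  | and (b c : BExp T) : BExp T
  | or (b c : BExp T) : BExp T
  | not (b : BExp T) : BExp T

/-- An atom: a complete truth assignment over the primitive tests. -/
abbrev Atom (T : Type*) := T → Bool

/-- Evaluation of a Boolean expression at an atom. -/
def BExp.eval {T : Type*} (α : Atom T) : BExp T → Bool
  | .zero => false
  | .one => true
  | .tst t => α t
  | .and b c => b.eval α && c.eval α
  | .or b c => b.eval α || c.eval α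
  | .not b => !(b.eval α)

/-- The set of atoms satisfying a Boolean expression. -/
def bsem {T : Type*} (b : BExp T) : Set (Atom T) := {α | b.eval α = true}

/-- GKAT expressions over actions `S` and primitive tests `T`. -/
inductive Exp (S T : Type*) where
  | act (p : S) : Exp S T
  | bexp (b : BExp T) : Exp S T
  | seq (e f : Exp S T) : Exp S T
  | ite (b : BExp T) (e f : Exp S T) : Exp S T
  | whle (b : BExp T) (e : Exp S T) : Exp S T

/-- Language semantics of GKAT expressions. -/
def sem {S T : Type*} : Exp S T → Set (GS S (Atom T))
  | .act p => {x | ∃ α β, x = (α, [(p, β)])}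
  | .bexp b => atomsL (bsem b)
  | .seq e f => fprod (sem e) (sem f)
  | .ite b e f => gunion (sem e) (sem f) (bsem b)
  | .whle b e => gloop (sem e) (bsem b)

/-- The sequence of atoms of a guarded string. -/
def atomsOf {S A : Type*} (x : GS S A) : List A := x.1 :: x.2.map Prod.snd

/-- The sequence of actions of a guarded string. -/
def actionsOf {S A : Type*} (x : GS S A) : List S := x.2.map Prod.fst

/-- The determinacy property: strings agreeing on their first `n` atoms agree
on their first `n` actions (or lack thereof). -/
def Deterministic {S A : Type*} (L : Set (GS S A)) : Prop :=
  ∀ x ∈ L, ∀ y ∈ L, ∀ n : ℕ,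
    (atomsOf x).take n = (atomsOf y).take n →
    (actionsOf x).take n = (actionsOf y).take n

/-- The termination test `E(e)` of a GKAT expression. -/
def Ef {S T : Type*} : Exp S T → BExp T
  | .act _ => .zero
  | .bexp b => b
  | .seq e f => .and (Ef e) (Ef f)
  | .ite b e f => .or (.and b (Ef e)) (.and (.not b) (Ef f))
  | .whle b _ => .not b

def Productive (L : Set (GS S A)) : Prop := ∀ x ∈ L, x.2 ≠ []

lemma lastAtom_append {x y : GS S A} (h : lastAtom x = y.1) :
    lastAtom ((x.1, x.2 ++ y.2) : GS S A) = lastAtom y := by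
  rcases y with ⟨a, v⟩
  rcases List.eq_nil_or_concat v with rfl | ⟨w, c, rfl⟩
  · simpa [lastAtom] using h
  · simp [lastAtom]

lemma mem_fprod {L K : Set (GS S A)} {x y : GS S A} (hx : x ∈ L) (hy : y ∈ K)
    (h : lastAtom x = y.1) : ((x.1, x.2 ++ y.2) : GS S A) ∈ fprod L K :=
  ⟨x, hx, y, hy, h, rfl⟩

lemma mk_nil_mem_fprod {L K : Set (GS S A)} {a : A} :
    ((a, []) : GS S A) ∈ fprod L K ↔ (a, []) ∈ L ∧ (a, []) ∈ K := by
  constructor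
  · rintro ⟨⟨a', u⟩, hx, ⟨c, v⟩, hy, hxy, h⟩
    simp only [Prod.mk.injEq, List.nil_eq, List.append_eq_nil_iff] at h
    obtain ⟨rfl, rfl, rfl⟩ := h
    obtain rfl : a = c := by simpa [lastAtom] using hxy
    exact ⟨hx, hy⟩
  · rintro ⟨hx, hy⟩
    exact mem_fprod hx hy rfl

lemma fprod_assoc (L K M : Set (GS S A)) : fprod (fprod L K) M = fprod L (fprod K M) := by
  ext z
  constructor
  · rintro ⟨_, ⟨x, hx, y, hy, hxy, rfl⟩, w, hw, hyw, rfl⟩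
    rw [lastAtom_append hxy] at hyw
    simpa using mem_fprod hx (mem_fprod hy hw hyw) hxy
  · rintro ⟨x, hx, _, ⟨y, hy, w, hw, hyw, rfl⟩, hxy, rfl⟩
    have hxy' : lastAtom x = y.1 := hxy
    simpa using mem_fprod (mem_fprod hx hy hxy') hw (by rwa [lastAtom_append hxy'])

lemma fprod_iUnion_left {ι : Sort*} (L : ι → Set (GS S A)) (K : Set (GS S A)) :
    fprod (⋃ i, L i) K = ⋃ i, fprod (L i) K := by
  ext z
  simp only [fprod, Set.mem_iUnion, Set.mem_ofPred_eq]
  aesop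

lemma fprod_iUnion_right {ι : Sort*} (L : Set (GS S A)) (K : ι → Set (GS S A)) :
    fprod L (⋃ i, K i) = ⋃ i, fprod L (K i) := by
  ext z
  simp only [fprod, Set.mem_iUnion, Set.mem_ofPred_eq]
  aesop

@[simp]
lemma atomsL_univ_fprod (L : Set (GS S A)) : fprod (atomsL Set.univ) L = L := by
  ext z
  constructor
  · rintro ⟨⟨a, u⟩, ⟨-, rfl⟩, y, hy, hxy, rfl⟩
    obtain rfl : a = y.1 := hxy
    simpa using hy
  · intro hz
    simpa using mem_fprod (L := atomsL Set.univ) (x := (z.1, [])) ⟨trivial, rfl⟩ hz rfl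

@[simp]
lemma fprod_atomsL_univ (L : Set (GS S A)) : fprod L (atomsL Set.univ) = L := by
  ext z
  constructor
  · rintro ⟨x, hx, ⟨a, v⟩, ⟨-, rfl⟩, -, rfl⟩
    simpa using hx
  · intro hz
    simpa using mem_fprod (K := atomsL Set.univ) (y := (lastAtom z, [])) hz ⟨trivial, rfl⟩ rfl

@[simp]
lemma fpow_zero (L : Set (GS S A)) : fpow L 0 = atomsL Set.univ := rfl

lemma fpow_succ' (L : Set (GS S A)) (n : ℕ) : fpow L (n + 1) = fprod L (fpow L n) := by
  induction n with
  | zero => simp [fpow]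
  | succ n ih =>
    show fprod (fpow L (n + 1)) L = fprod L (fprod (fpow L n) L)
    rw [ih, fprod_assoc]

lemma Productive.fprod {K : Set (GS S A)} (L : Set (GS S A)) (hK : Productive K) :
    Productive (fprod L K) := by
  rintro _ ⟨x, -, y, hy, -, rfl⟩
  simpa using fun _ => hK y hy

lemma subset_of_subset_fprod_union {M K G R : Set (GS S A)} (hM : Productive M)
    (hG : G ⊆ fprod M G ∪ K) (hR : fprod M R ∪ K ⊆ R) : G ⊆ R := by
  suffices ∀ n, ∀ x ∈ G, x.2.length = n → x ∈ R from fun x hx => this _ x hx rfl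
  intro n
  induction n using Nat.strong_induction_on with
  | _ n ih =>
    rintro x hx rfl
    apply hR
    rcases hG hx with ⟨m, hm, y, hy, hmy, rfl⟩ | hK
    · have hshorter : y.2.length < (m.2 ++ y.2).length := by
        simpa using List.length_pos_iff.2 (hM m hm)
      exact Or.inl (mem_fprod hm (ih _ hshorter y hy rfl) hmy)
    · exact Or.inr hK

theorem eq_iUnion_fprod_fpow_of_eq {M K G : Set (GS S A)} (hM : Productive M)
    (hG : G = fprod M G ∪ K) : G = ⋃ n, fprod (fpow M n) K := by
  apply (subset_of_subset_fprod_union hM hG.subset _).antisymm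
  · refine Set.iUnion_subset fun n => ?_
    induction n with
    | zero => simpa using Set.subset_union_right.trans hG.symm.subset
    | succ n ih =>
      rw [fpow_succ', fprod_assoc]
      exact (fprod_mono le_rfl ih).trans (Set.subset_union_left.trans hG.symm.subset)
  · refine Set.union_subset ?_ ?_
    · rw [fprod_iUnion_right]
      refine Set.iUnion_subset fun n => ?_
      rw [← fprod_assoc, ← fpow_succ']
      exact Set.subset_iUnion (fun n => fprod (fpow M n) K) (n + 1)
    · simpa using Set.subset_iUnion (fun n => fprod (fpow M n) K) 0

lemma fprod_gloop (L K : Set (GS S A)) (B : Set A) :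
    fprod (gloop L B) K = ⋃ n, fprod (fpow (fprod (atomsL B) L) n) (fprod (atomsL Bᶜ) K) := by
  simp only [gloop, fprod_iUnion_left, fprod_assoc]

lemma Ef_eval_of_mk_nil_mem_sem {T : Type*} (e : Exp S T) {α : Atom T}
    (h : ((α, []) : GS S (Atom T)) ∈ sem e) : (Ef e).eval α = true := by
  induction e with
  | act p => simp [sem] at h
  | bexp c => exact h.1
  | seq e f ihe ihf =>
    obtain ⟨he, hf⟩ := mk_nil_mem_fprod.1 h
    simp [Ef, BExp.eval, ihe he, ihf hf]
  | ite c e f ihe ihf =>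
    rcases h with h | h <;> obtain ⟨⟨hc, -⟩, h⟩ := mk_nil_mem_fprod.1 h <;>
      simp_all [Ef, BExp.eval, bsem]
  | whle c e =>
    obtain ⟨-, ⟨n, rfl⟩, h⟩ := h
    simpa [Ef, BExp.eval, bsem] using (mk_nil_mem_fprod.1 h).2.1

lemma productive_sem {T : Type*} {e : Exp S T} (hE : ∀ α : Atom T, (Ef e).eval α = false) :
    Productive (sem e) := by
  rintro ⟨α, u⟩ hx rfl
  simpa [hE α] using Ef_eval_of_mk_nil_mem_sem e hx

theorem fixpoint_sound_general {S T : Type*}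
    (e f g : Exp S T) (b : BExp T)
    (hE : ∀ α : Atom T, (Ef e).eval α = false)
    (hg : sem g = gunion (fprod (sem e) (sem g)) (sem f) (bsem b)) :
    sem g = fprod (gloop (sem e) (bsem b)) (sem f) := by
  rw [fprod_gloop]
  refine eq_iUnion_fprod_fpow_of_eq ((productive_sem hE).fprod _) ?_
  rwa [fprod_assoc]

theorem fixpoint_sound {S T : Type*} [Fintype S] [Fintype T] [Nonempty S] [Nonempty T]
    (e f g : Exp S T) (b : BExp T)
    (hE : ∀ α : Atom T, (Ef e).eval α = false)
    (hg : sem g = gunion (fprod (sem e) (sem g)) (sem f) (bsem b)) :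
    sem g = fprod (gloop (sem e) (bsem b)) (sem f) :=
  fixpoint_sound_general e f g b hE hg
end

section
/- Normalization preserves languages: for any G-coalgebra X = (X, δ) with normalization X̂ = (X, δ̂) (where transitions into dead states are replaced by rejection), every state accepts the same finite-string language in X and in X̂: ℓ_X(s) = ℓ_{X̂}(s) for all s. -/
/-- The output of a `G`-coalgebra on a state and an atom: accept, reject, or
produce an action and move to a new state. -/
inductive GOut (S X : Type*) where
  | acc : GOut S X
  | rej : GOut S X
  | step (p : S) (x : X) : GOut S X

variable {S A X Y : Type*}

/-- Acceptance of a (finite) guarded string from a state: the least fixpoint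
interpretation of the acceptance equations. -/
inductive Accepts (δ : X → A → GOut S X) : X → GS S A → Prop where
  | base {x : X} {α : A} : δ x α = .acc → Accepts δ x (α, [])
  | step {x x' : X} {α : A} {p : S} {w : GS S A} :
      δ x α = .step p x' → Accepts δ x' w → Accepts δ x (α, (p, w.1) :: w.2)

/-- The finite-string language accepted from a state. -/
def lang (δ : X → A → GOut S X) (x : X) : Set (GS S A) := {w | Accepts δ x w}

/-- A bisimulation between two `G`-coalgebras. -/
def IsBisim (δX : X → A → GOut S X) (δY : Y → A → GOut S Y) (R : X → Y → Prop) : Prop :=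
  ∀ x y, R x y → ∀ α : A,
    (δX x α = .acc → δY y α = .acc) ∧
    (δX x α = .rej → δY y α = .rej) ∧
    (∀ (p : S) (x' : X), δX x α = .step p x' →
      ∃ y' : Y, δY y α = .step p y' ∧ R x' y')

open Classical in
/-- The normalization of a coalgebra: transitions into dead states (states whose
language is empty) are replaced by rejection. -/
noncomputable def gNormalize (δ : X → A → GOut S X) (x : X) (α : A) : GOut S X :=
  match δ x α with
  | .step p t => if lang δ t = ∅ then .rej else .step p t
  | o => o

theorem normalize_lang_eq [Fintype S] [Fintype A] [Nonempty S] [Nonempty A]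
    (δ : X → A → GOut S X) (s : X) :
    lang δ s = lang (gNormalize δ) s := by
  classical
  ext w
  constructor
  · intro h
    induction h with
    | base h => exact Accepts.base (by simp [gNormalize, h])
    | @step x x' α p w2 h ha ih =>
      have hne : lang δ x' ≠ ∅ := by
        intro he
        rw [Set.eq_empty_iff_forall_notMem] at he
        exact he _ ha
      exact Accepts.step (show gNormalize δ x α = .step p x' by
        simp [gNormalize, h, hne]) ih
  · intro h
    induction h with
    | @base x α h =>
      refine Accepts.base ?_
      unfold gNormalize at h
      rcases hd : δ x α with _ | _ | ⟨p, t⟩ <;> rw [hd] at h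
      · exact h
      · have h' : (if lang δ t = ∅ then GOut.rej else GOut.step p t) = GOut.acc := h
        split at h' <;> exact absurd h' (by simp)
    | @step x x' α p w2 h _ ih =>
      unfold gNormalize at h
      rcases hd : δ x α with _ | _ | ⟨q, t⟩ <;> rw [hd] at h
      · exact absurd (show GOut.acc = GOut.step p x' from h) (by simp)
      · exact absurd (show GOut.rej = GOut.step p x' from h) (by simp)
      · have h' : (if lang δ t = ∅ then GOut.rej else GOut.step q t) = GOut.step p x' := h
        split at h'
        · exact absurd h' (by simp)
        · injection h' with h1 h2
          subst h1; subst h2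
          exact Accepts.step hd ih
end

section
/- In a normal G-coalgebra, language equivalence implies bisimilarity: if X and Y are normal G-coalgebras (no transitions into dead states) and ℓ_X(s) = ℓ_Y(t), then the relation {(s,t) : ℓ_X(s) = ℓ_Y(t)} is a bisimulation; in particular s and t are bisimilar. -/
variable {S A X Y : Type*}

/-- A coalgebra is normal if it has no transitions into dead states. -/
def IsNormalCoalg (δ : X → A → GOut S X) : Prop :=
  ∀ (x : X) (α : A) (p : S) (x' : X), δ x α = .step p x' → lang δ x' ≠ ∅

theorem accepts_cons_inv {δ : X → A → GOut S X} {x : X} {α β : A} {p : S}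
    {l : List (S × A)} (h : Accepts δ x (α, (p, β) :: l)) :
    ∃ x', δ x α = .step p x' ∧ Accepts δ x' (β, l) := by
  cases h with
  | step h' hw => exact ⟨_, h', hw⟩

theorem mem_lang_iff (δ : X → A → GOut S X) (x : X) (w : GS S A) :
    w ∈ lang δ x ↔ Accepts δ x w := Iff.rfl

theorem lang_eq_implies_bisimilar [Fintype S] [Fintype A] [Nonempty S] [Nonempty A]
    (δX : X → A → GOut S X) (δY : Y → A → GOut S Y)
    (hX : IsNormalCoalg δX) (hY : IsNormalCoalg δY) :
    IsBisim δX δY (fun s t => lang δX s = lang δY t) ∧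
    ∀ (s : X) (t : Y), lang δX s = lang δY t →
      ∃ R : X → Y → Prop, IsBisim δX δY R ∧ R s t := by
  have key : IsBisim δX δY (fun s t => lang δX s = lang δY t) := by
    intro x y h α
    refine ⟨?_, ?_, ?_⟩
    · intro hacc
      have : (α, ([] : List (S × A))) ∈ lang δY y := h ▸ Accepts.base hacc
      cases this with
      | base h => exact h
    · intro hrej
      cases hy : δY y α with
      | acc =>
        exfalso
        have : (α, ([] : List (S × A))) ∈ lang δX x := h ▸ Accepts.base hy
        cases this with
        | base h' => rw [hrej] at h'; cases h'
      | rej => rfl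
      | step p y' =>
        exfalso
        rcases Set.nonempty_iff_ne_empty.mpr (hY y α p y' hy) with ⟨w, hw⟩
        have : (α, (p, w.1) :: w.2) ∈ lang δX x := h ▸ Accepts.step hy hw
        obtain ⟨x', h', -⟩ := accepts_cons_inv this
        rw [hrej] at h'; cases h'
    · intro p x' hstep
      rcases Set.nonempty_iff_ne_empty.mpr (hX x α p x' hstep) with ⟨w0, hw0⟩
      have hmem : (α, (p, w0.1) :: w0.2) ∈ lang δY y := h ▸ Accepts.step hstep hw0
      obtain ⟨y', hy, -⟩ := accepts_cons_inv hmem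
      refine ⟨y', hy, ?_⟩
      ext w
      constructor
      · intro hw
        have : (α, (p, w.1) :: w.2) ∈ lang δY y := h ▸ Accepts.step hstep hw
        obtain ⟨y'', h', hw'⟩ := accepts_cons_inv this
        rw [hy] at h'; cases h'; exact hw'
      · intro hw
        have : (α, (p, w.1) :: w.2) ∈ lang δX x := h.symm ▸ Accepts.step hy hw
        obtain ⟨x'', h', hw'⟩ := accepts_cons_inv this
        rw [hstep] at h'; cases h'; exact hw'
  exact ⟨key, fun s t h => ⟨_, key, h⟩⟩
end

section
/- Fusion product is contractive in the second argument with respect to the guarded-string metric: for languages A, B, C of guarded strings, if every string of A contains at least one action symbol, then d(A ⋄ B, A ⋄ C) ≤ (1/2)·d(B, C), where d(X,Y) = 2^{-‖X △ Y‖} and ‖Z‖ is the minimal number of actions in a string of Z. -/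
variable {S A : Type*}

open scoped symmDiff

/-- The minimal number of action symbols in a string of `C` (`∞` if `C = ∅`). -/
noncomputable def gsnorm {S A : Type*} (C : Set (GS S A)) : ℕ∞ :=
  ⨅ x ∈ C, (x.2.length : ℕ∞)

/-- `2^{-m}`, with `2^{-∞} = 0`. -/
noncomputable def pow2neg (m : ℕ∞) : ℝ :=
  if m = ⊤ then 0 else (2 : ℝ) ^ (-((m.untopD 0 : ℕ) : ℤ))

/-- The metric `d(X,Y) = 2^{-‖X △ Y‖}` on languages of guarded strings. -/
noncomputable def gdist {S A : Type*} (X Y : Set (GS S A)) : ℝ :=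
  pow2neg (gsnorm (X ∆ Y))

/-! Every string of `L ⋄ (K △ M)` is a string of `L` with at least one action, followed by a
string of `K △ M`; hence `‖L⋄K △ L⋄M‖ ≥ ‖L ⋄ (K △ M)‖ ≥ 1 + ‖K △ M‖`, and `2^{-(1+n)} = 2^{-n}/2`. -/

lemma pow2neg_nonneg (m : ℕ∞) : 0 ≤ pow2neg m := by
  unfold pow2neg
  split <;> positivity

lemma pow2neg_natCast (n : ℕ) : pow2neg n = (2 : ℝ) ^ (-(n : ℤ)) := by
  simp [pow2neg]

lemma pow2neg_antitone : Antitone pow2neg := by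
  intro m n hmn
  induction n using ENat.recTopCoe with
  | top => simpa [pow2neg] using pow2neg_nonneg m
  | coe n =>
    lift m to ℕ using ne_top_of_le_ne_top (ENat.natCast_ne_top n) hmn
    rw [pow2neg_natCast, pow2neg_natCast]
    exact zpow_le_zpow_right₀ one_le_two (by simpa using hmn)

lemma pow2neg_one_add (n : ℕ∞) : pow2neg (1 + n) = 1 / 2 * pow2neg n := by
  induction n using ENat.recTopCoe with
  | top => simp [pow2neg]
  | coe n =>
    rw [← ENat.natCast_one, ← ENat.natCast_add, pow2neg_natCast, pow2neg_natCast, Nat.cast_add, neg_add,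
      zpow_add₀ two_ne_zero]
    simp

lemma gsnorm_anti {X Y : Set (GS S A)} (h : X ⊆ Y) : gsnorm Y ≤ gsnorm X :=
  le_iInf₂ fun x hx => iInf₂_le x (h hx)

lemma symmDiff_fprod_subset_fprod_symmDiff (L K M : Set (GS S A)) :
    fprod L K ∆ fprod L M ⊆ fprod L (K ∆ M) := by
  rintro z (⟨⟨x, hx, y, hy, hxy, rfl⟩, hnot⟩ | ⟨⟨x, hx, y, hy, hxy, rfl⟩, hnot⟩)
  · exact ⟨x, hx, y, Or.inl ⟨hy, fun hyM => hnot ⟨x, hx, y, hyM, hxy, rfl⟩⟩, hxy, rfl⟩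
  · exact ⟨x, hx, y, Or.inr ⟨hy, fun hyK => hnot ⟨x, hx, y, hyK, hxy, rfl⟩⟩, hxy, rfl⟩

lemma one_add_gsnorm_le_gsnorm_fprod {L : Set (GS S A)} (hL : ∀ x ∈ L, x.2 ≠ [])
    (K : Set (GS S A)) : 1 + gsnorm K ≤ gsnorm (fprod L K) := by
  refine le_iInf₂ ?_
  rintro _ ⟨x, hx, y, hy, -, rfl⟩
  have hx1 : (1 : ℕ∞) ≤ x.2.length := by
    exact_mod_cast List.length_pos_iff.mpr (hL x hx)
  calc 1 + gsnorm K ≤ x.2.length + y.2.length := add_le_add hx1 (iInf₂_le y hy)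
    _ = (x.2 ++ y.2).length := by simp

theorem fprod_contractive_general {S A : Type*}
    (L K M : Set (GS S A)) (hL : ∀ x ∈ L, x.2 ≠ []) :
    gdist (fprod L K) (fprod L M) ≤ (1 / 2) * gdist K M := by
  have hnorm : 1 + gsnorm (K ∆ M) ≤ gsnorm (fprod L K ∆ fprod L M) :=
    (one_add_gsnorm_le_gsnorm_fprod hL _).trans
      (gsnorm_anti (symmDiff_fprod_subset_fprod_symmDiff L K M))
  calc gdist (fprod L K) (fprod L M) ≤ pow2neg (1 + gsnorm (K ∆ M)) := pow2neg_antitone hnorm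
    _ = 1 / 2 * gdist K M := pow2neg_one_add _

theorem fprod_contractive {S A : Type*} [Fintype S] [Fintype A] [Nonempty S] [Nonempty A]
    (L K M : Set (GS S A)) (hL : ∀ x ∈ L, x.2 ≠ []) :
    gdist (fprod L K) (fprod L M) ≤ (1 / 2) * gdist K M :=
  fprod_contractive_general L K M hL
end
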